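/- arXiv:1510.06695 — 11 statements merged into one kernel-verified Lean document; each statement's English description precedes it below -/
import Mathlib

section
/- Let (x*, y*, w*) be an equilibrium of the GNEP associated with the bilevel problem. Suppose that g(x, w*) ≤ 0 for all x such that there exists y with (x,y) ∈ W and F(x,y) ≤ F(x*,y*). Then (x*, y*) is a global solution of the SBP, i.e., (x*,y*) ∈ W and F(x*,y*) ≤ F(x,y) for all (x,y) ∈ W. -/
/-- Under the extra condition on g(·, w*), an equilibrium of the GNEP
gives a global solution of the SBP. -/
theorem gnep_equilibrium_global_solution_sbp {n₁ n₂ m : ℕ}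
    (F f : (Fin n₁ → ℝ) → (Fin n₂ → ℝ) → ℝ)
    (g : (Fin n₁ → ℝ) → (Fin n₂ → ℝ) → Fin m → ℝ)
    (X : Set (Fin n₁ → ℝ)) (U : Set (Fin n₂ → ℝ))
    (Wmem : (Fin n₁ → ℝ) → (Fin n₂ → ℝ) → Prop)
    (hW : ∀ x y, Wmem x y ↔
      x ∈ X ∧ y ∈ U ∧ g x y ≤ 0 ∧ ∀ w ∈ U, g x w ≤ 0 → f x y ≤ f x w)
    (xs : Fin n₁ → ℝ) (ys ws : Fin n₂ → ℝ)
    (hx : xs ∈ X) (hy : ys ∈ U)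
    (hfy : f xs ys ≤ f xs ws) (hgy : g xs ys ≤ 0)
    (hLopt : ∀ x ∈ X, ∀ y ∈ U, f x y ≤ f x ws → g x y ≤ 0 → F xs ys ≤ F x y)
    (hw : ws ∈ U) (hgw : g xs ws ≤ 0)
    (hFopt : ∀ w ∈ U, g xs w ≤ 0 → f xs ws ≤ f xs w)
    (hcond : ∀ x, (∃ y, Wmem x y ∧ F x y ≤ F xs ys) → g x ws ≤ 0) :
    Wmem xs ys ∧ ∀ x y, Wmem x y → F xs ys ≤ F x y := by
  constructor
  · exact (hW xs ys).mpr ⟨hx, hy, hgy,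
      fun w hwU hgwle => le_trans hfy (hFopt w hwU hgwle)⟩
  · intro x y hxy
    obtain ⟨hxX, hyU, hgxy, hopt⟩ := (hW x y).mp hxy
    by_contra h
    have hle : F x y ≤ F xs ys := le_of_lt (lt_of_not_ge h)
    have hgws : g x ws ≤ 0 := hcond x ⟨y, hxy, hle⟩
    exact h (hLopt x hxX y hyU (hopt ws hw hgws) hgxy)
end

section
/- Suppose the lower-level feasible set mapping x ↦ U ∩ {w : g(x,w) ≤ 0} is constant on X ∩ dom(U ∩ K) (equal to some fixed nonempty set C for every x there). If (x*,y*,w*) is an equilibrium of the GNEP, then (x*,y*) is a global solution of the SBP. -/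
/-- If the lower-level feasible set mapping is constant on
X ∩ dom(U ∩ K), then an equilibrium of the GNEP is a global solution of the SBP. -/
theorem constant_feasible_set_gnep_to_sbp {n₁ n₂ m : ℕ}
    (F f : (Fin n₁ → ℝ) → (Fin n₂ → ℝ) → ℝ)
    (g : (Fin n₁ → ℝ) → (Fin n₂ → ℝ) → Fin m → ℝ)
    (X : Set (Fin n₁ → ℝ)) (U : Set (Fin n₂ → ℝ))
    (C : Set (Fin n₂ → ℝ)) (hCne : C.Nonempty)
    (hconst : ∀ x ∈ X, (U ∩ {w | g x w ≤ 0}).Nonempty → U ∩ {w | g x w ≤ 0} = C)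
    (Wmem : (Fin n₁ → ℝ) → (Fin n₂ → ℝ) → Prop)
    (hW : ∀ x y, Wmem x y ↔
      x ∈ X ∧ y ∈ U ∧ g x y ≤ 0 ∧ ∀ w ∈ U, g x w ≤ 0 → f x y ≤ f x w)
    (xs : Fin n₁ → ℝ) (ys ws : Fin n₂ → ℝ)
    (hx : xs ∈ X) (hy : ys ∈ U)
    (hfy : f xs ys ≤ f xs ws) (hgy : g xs ys ≤ 0)
    (hLopt : ∀ x ∈ X, ∀ y ∈ U, f x y ≤ f x ws → g x y ≤ 0 → F xs ys ≤ F x y)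
    (hw : ws ∈ U) (hgw : g xs ws ≤ 0)
    (hFopt : ∀ w ∈ U, g xs w ≤ 0 → f xs ws ≤ f xs w) :
    Wmem xs ys ∧ ∀ x y, Wmem x y → F xs ys ≤ F x y := by
  constructor
  · rw [hW]
    exact ⟨hx, hy, hgy, fun w hwU hgw' => hfy.trans (hFopt w hwU hgw')⟩
  · intro x y hxy
    rw [hW] at hxy
    obtain ⟨hxX, hyU, hgxy, hmin⟩ := hxy
    have hCxs : U ∩ {w | g xs w ≤ 0} = C := hconst xs hx ⟨ws, hw, hgw⟩
    have hCx : U ∩ {w | g x w ≤ 0} = C := hconst x hxX ⟨y, hyU, hgxy⟩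
    have hwsC : ws ∈ U ∩ {w | g x w ≤ 0} := by
      rw [hCx, ← hCxs]; exact ⟨hw, hgw⟩
    exact hLopt x hxX y hyU (hmin ws hwsC.1 hwsC.2) hgxy
end

section
/- Suppose the lower-level solution set mapping S is constant (equal to a fixed set) on X ∩ dom(U ∩ K). If (x*,y*,w*) is an equilibrium of the GNEP, then (x*,y*) is a global solution of the SBP. -/
/-- If the lower-level solution set mapping S is constant on
X ∩ dom(U ∩ K), then an equilibrium of the GNEP is a global solution of the SBP. -/
theorem constant_solution_set_gnep_to_sbp {n₁ n₂ m : ℕ}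
    (F f : (Fin n₁ → ℝ) → (Fin n₂ → ℝ) → ℝ)
    (g : (Fin n₁ → ℝ) → (Fin n₂ → ℝ) → Fin m → ℝ)
    (X : Set (Fin n₁ → ℝ)) (U : Set (Fin n₂ → ℝ))
    (S : (Fin n₁ → ℝ) → Set (Fin n₂ → ℝ))
    (hS : ∀ x, S x = {w | w ∈ U ∧ g x w ≤ 0 ∧ ∀ v ∈ U, g x v ≤ 0 → f x w ≤ f x v})
    (S₀ : Set (Fin n₂ → ℝ))
    (hconst : ∀ x ∈ X, (U ∩ {w | g x w ≤ 0}).Nonempty → S x = S₀)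
    (xs : Fin n₁ → ℝ) (ys ws : Fin n₂ → ℝ)
    (hx : xs ∈ X) (hy : ys ∈ U)
    (hfy : f xs ys ≤ f xs ws) (hgy : g xs ys ≤ 0)
    (hLopt : ∀ x ∈ X, ∀ y ∈ U, f x y ≤ f x ws → g x y ≤ 0 → F xs ys ≤ F x y)
    (hw : ws ∈ U) (hgw : g xs ws ≤ 0)
    (hFopt : ∀ w ∈ U, g xs w ≤ 0 → f xs ws ≤ f xs w) :
    (xs ∈ X ∧ ys ∈ S xs) ∧ ∀ x ∈ X, ∀ y ∈ S x, F xs ys ≤ F x y := by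
  have hysS : ys ∈ S xs := by
    rw [hS]
    exact ⟨hy, hgy, fun v hv hgv => hfy.trans (hFopt v hv hgv)⟩
  have hwsS : ws ∈ S xs := by
    rw [hS]; exact ⟨hw, hgw, hFopt⟩
  have hSxs : S xs = S₀ := hconst xs hx ⟨ws, hw, hgw⟩
  refine ⟨⟨hx, hysS⟩, fun x hxX y hyS => ?_⟩
  have hySx := hyS
  rw [hS] at hySx
  obtain ⟨hyU, hgxy, hopt⟩ := hySx
  have hSx : S x = S₀ := hconst x hxX ⟨y, hyU, hgxy⟩
  have hwsSx : ws ∈ S x := by rw [hSx, ← hSxs]; exact hwsS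
  rw [hS] at hwsSx
  exact hLopt x hxX y hyU (hopt ws hwsSx.1 hwsSx.2.1) hgxy
end

section
/- Suppose the lower-level solution set mapping S is constant on X ∩ dom(U ∩ K). If (x*,y*) is a global solution of the SBP, then for every w* ∈ U with g(x*,w*) ≤ 0 and f(x*,w*) = f(x*,y*), the triple (x*,y*,w*) is an equilibrium of the GNEP. -/
/-- If S is constant on X ∩ dom(U ∩ K), a global solution of the SBP
yields equilibria of the GNEP. -/
theorem constant_solution_set_sbp_to_gnep {n₁ n₂ m : ℕ}
    (F f : (Fin n₁ → ℝ) → (Fin n₂ → ℝ) → ℝ)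
    (g : (Fin n₁ → ℝ) → (Fin n₂ → ℝ) → Fin m → ℝ)
    (X : Set (Fin n₁ → ℝ)) (U : Set (Fin n₂ → ℝ))
    (S : (Fin n₁ → ℝ) → Set (Fin n₂ → ℝ))
    (hS : ∀ x, S x = {w | w ∈ U ∧ g x w ≤ 0 ∧ ∀ v ∈ U, g x v ≤ 0 → f x w ≤ f x v})
    (S₀ : Set (Fin n₂ → ℝ))
    (hconst : ∀ x ∈ X, (U ∩ {w | g x w ≤ 0}).Nonempty → S x = S₀)
    (xs : Fin n₁ → ℝ) (ys : Fin n₂ → ℝ)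
    (hx : xs ∈ X) (hy : ys ∈ S xs)
    (hglob : ∀ x ∈ X, ∀ y ∈ S x, F xs ys ≤ F x y)
    (ws : Fin n₂ → ℝ) (hw : ws ∈ U) (hgw : g xs ws ≤ 0)
    (hfw : f xs ws = f xs ys) :
    (xs ∈ X ∧ ys ∈ U) ∧ f xs ys ≤ f xs ws ∧ g xs ys ≤ 0 ∧
    (∀ x ∈ X, ∀ y ∈ U, f x y ≤ f x ws → g x y ≤ 0 → F xs ys ≤ F x y) ∧
    ws ∈ U ∧ g xs ws ≤ 0 ∧
    (∀ w ∈ U, g xs w ≤ 0 → f xs ws ≤ f xs w) := by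
  rw [hS] at hy
  obtain ⟨hyU, hgy, hopt⟩ := hy
  have hwopt : ∀ w ∈ U, g xs w ≤ 0 → f xs ws ≤ f xs w := by
    intro w hwU hgw'
    rw [hfw]; exact hopt w hwU hgw'
  have hwS : ws ∈ S xs := by
    rw [hS]; exact ⟨hw, hgw, hwopt⟩
  have hSxs : S xs = S₀ := hconst xs hx ⟨ws, hw, hgw⟩
  refine ⟨⟨hx, hyU⟩, le_of_eq hfw.symm, hgy, ?_, hw, hgw, hwopt⟩
  intro x hxX y hyU' hfy hgy'
  have hSx : S x = S₀ := hconst x hxX ⟨y, hyU', hgy'⟩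
  have hwSx : ws ∈ S x := by rw [hSx, ← hSxs]; exact hwS
  rw [hS] at hwSx
  have : y ∈ S x := by
    rw [hS]
    exact ⟨hyU', hgy', fun v hv hgv => le_trans hfy (hwSx.2.2 v hv hgv)⟩
  exact hglob x hxX y this
end

section
/- If (x*,y*) is a strong local solution of the SBP (i.e., (x*,y*) ∈ W and there is an open neighborhood N* of x* with F(x*,y*) ≤ F(x,y) for all (x,y) ∈ W with x ∈ N*), then x* is a local solution of the original optimistic bilevel problem: x* ∈ X, S(x*) is nonempty, and inf{F(x*,y) : y ∈ S(x*)} ≤ inf{F(x,y) : y ∈ S(x)} for all x ∈ X ∩ N*. -/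
/-- A strong local solution of the SBP gives a local solution of the OBP. -/
theorem strong_local_sbp_gives_local_obp {n₁ n₂ m : ℕ}
    (F f : (Fin n₁ → ℝ) → (Fin n₂ → ℝ) → ℝ)
    (g : (Fin n₁ → ℝ) → (Fin n₂ → ℝ) → Fin m → ℝ)
    (X : Set (Fin n₁ → ℝ)) (U : Set (Fin n₂ → ℝ))
    (S : (Fin n₁ → ℝ) → Set (Fin n₂ → ℝ))
    (hS : ∀ x, S x = {w | w ∈ U ∧ g x w ≤ 0 ∧ ∀ v ∈ U, g x v ≤ 0 → f x w ≤ f x v})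
    (xs : Fin n₁ → ℝ) (ys : Fin n₂ → ℝ)
    (hx : xs ∈ X) (hy : ys ∈ S xs)
    (Nstar : Set (Fin n₁ → ℝ)) (hNopen : IsOpen Nstar) (hxN : xs ∈ Nstar)
    (hloc : ∀ x ∈ X, ∀ y ∈ S x, x ∈ Nstar → F xs ys ≤ F x y) :
    xs ∈ X ∧ (S xs).Nonempty ∧
    ∀ x ∈ X ∩ Nstar,
      sInf ((fun y => (F xs y : EReal)) '' S xs) ≤
        sInf ((fun y => (F x y : EReal)) '' S x) := by
  refine ⟨hx, ⟨ys, hy⟩, ?_⟩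
  rintro x ⟨hxX, hxNs⟩
  refine le_sInf ?_
  rintro b ⟨y, hyS, rfl⟩
  calc sInf ((fun y => (F xs y : EReal)) '' S xs) ≤ (F xs ys : EReal) :=
        sInf_le ⟨ys, hy, rfl⟩
    _ ≤ (F x y : EReal) := EReal.coe_le_coe_iff.mpr (hloc x hxX y hyS hxNs)
end

section
/- Let (x*,y*,w*) be an equilibrium of the GNEP. Suppose that for every index i with g_i(x*,w*) = 0 there is an open neighborhood N* of x* such that g_i(x,w*) ≤ 0 for all x ∈ N* for which there exists y with (x,y) ∈ W and F(x,y) ≤ F(x*,y*). Then (x*,y*) is a strong local solution of the SBP: (x*,y*) ∈ W and there exists an open neighborhood N of x* with F(x*,y*) ≤ F(x,y) for all (x,y) ∈ W with x ∈ N. -/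
/-- Local version: under the active-constraint neighborhood condition,
an equilibrium of the GNEP gives a strong local solution of the SBP. -/
theorem gnep_equilibrium_strong_local_sbp {n₁ n₂ m : ℕ}
    (F f : (Fin n₁ → ℝ) → (Fin n₂ → ℝ) → ℝ)
    (g : (Fin n₁ → ℝ) → (Fin n₂ → ℝ) → Fin m → ℝ)
    (hgcont : Continuous fun p : (Fin n₁ → ℝ) × (Fin n₂ → ℝ) => g p.1 p.2)
    (hfcont : Continuous fun p : (Fin n₁ → ℝ) × (Fin n₂ → ℝ) => f p.1 p.2)
    (X : Set (Fin n₁ → ℝ)) (U : Set (Fin n₂ → ℝ))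
    (Wmem : (Fin n₁ → ℝ) → (Fin n₂ → ℝ) → Prop)
    (hW : ∀ x y, Wmem x y ↔
      x ∈ X ∧ y ∈ U ∧ g x y ≤ 0 ∧ ∀ w ∈ U, g x w ≤ 0 → f x y ≤ f x w)
    (xs : Fin n₁ → ℝ) (ys ws : Fin n₂ → ℝ)
    (hx : xs ∈ X) (hy : ys ∈ U)
    (hfy : f xs ys ≤ f xs ws) (hgy : g xs ys ≤ 0)
    (hLopt : ∀ x ∈ X, ∀ y ∈ U, f x y ≤ f x ws → g x y ≤ 0 → F xs ys ≤ F x y)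
    (hw : ws ∈ U) (hgw : g xs ws ≤ 0)
    (hFopt : ∀ w ∈ U, g xs w ≤ 0 → f xs ws ≤ f xs w)
    (hactive : ∀ i : Fin m, g xs ws i = 0 →
      ∃ N : Set (Fin n₁ → ℝ), IsOpen N ∧ xs ∈ N ∧
        ∀ x ∈ N, (∃ y, Wmem x y ∧ F x y ≤ F xs ys) → g x ws i ≤ 0) :
    Wmem xs ys ∧
    ∃ N : Set (Fin n₁ → ℝ), IsOpen N ∧ xs ∈ N ∧
      ∀ x y, Wmem x y → x ∈ N → F xs ys ≤ F x y := by
  have hWxy : Wmem xs ys := by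
    rw [hW]
    exact ⟨hx, hy, hgy, fun w hwU hgw' => le_trans hfy (hFopt w hwU hgw')⟩
  refine ⟨hWxy, ?_⟩
  have hNi : ∀ i : Fin m, ∃ N : Set (Fin n₁ → ℝ), IsOpen N ∧ xs ∈ N ∧
      ∀ x ∈ N, (∃ y, Wmem x y ∧ F x y ≤ F xs ys) → g x ws i ≤ 0 := by
    intro i
    by_cases h : g xs ws i = 0
    · exact hactive i h
    · have hlt : g xs ws i < 0 := lt_of_le_of_ne (hgw i) h
      have hc : Continuous fun x => g x ws i :=
        (continuous_apply i).comp (hgcont.comp (Continuous.prodMk_left ws))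
      exact ⟨{x | g x ws i < 0}, isOpen_lt hc continuous_const, hlt,
        fun x hx' _ => le_of_lt hx'⟩
  choose N hNopen hNmem hNprop using hNi
  refine ⟨⋂ i, N i, isOpen_iInter_of_finite hNopen, Set.mem_iInter.2 hNmem, ?_⟩
  intro x y hWxy' hxN
  by_contra hlt
  push_neg at hlt
  have hFle : F x y ≤ F xs ys := le_of_lt hlt
  have hgx : g x ws ≤ 0 := fun i => hNprop i x (Set.mem_iInter.1 hxN i) ⟨y, hWxy', hFle⟩
  rw [hW] at hWxy'
  obtain ⟨hxX, hyU, hgxy, hfmin⟩ := hWxy'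
  exact absurd (hLopt x hxX y hyU (hfmin ws hw hgx) hgxy) (not_le.2 hlt)
end

section
/- For the GNEP in which the leader minimizes x² + y² over (x,y) subject to x ≥ 1, y ≤ w, x + y ≥ 1, and the follower minimizes w subject to x + w ≥ 1: a triple (x,y,w) is an equilibrium if and only if there exists λ ≤ 0 with (x,y,w) = (1-λ, λ, λ). -/
/-- Example 1, GNEP side: the equilibria of the GNEP are exactly the
triples (1-λ, λ, λ) for λ ≤ 0. -/
theorem example1_gnep_equilibria (x y w : ℝ) :
    ((x ≥ 1 ∧ y ≤ w ∧ x + y ≥ 1) ∧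
     (∀ u v : ℝ, u ≥ 1 → v ≤ w → u + v ≥ 1 → x^2 + y^2 ≤ u^2 + v^2) ∧
     (x + w ≥ 1) ∧
     (∀ w' : ℝ, x + w' ≥ 1 → w ≤ w')) ↔
    ∃ lam : ℝ, lam ≤ 0 ∧ x = 1 - lam ∧ y = lam ∧ w = lam := by
  constructor
  · rintro ⟨⟨hx1, hyw, hxy⟩, hmin, hxw, hfol⟩
    have hw : w = 1 - x := le_antisymm (hfol (1 - x) (by linarith)) (by linarith)
    have hw0 : w ≤ 0 := by linarith
    have hkey : x ^ 2 + y ^ 2 ≤ (1 - w) ^ 2 + w ^ 2 :=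
      hmin (1 - w) w (by linarith) le_rfl (by linarith)
    have hyw2 : y = w := by nlinarith [sq_nonneg (x - (1 - y)), sq_nonneg (y - w)]
    refine ⟨w, hw0, by linarith, hyw2, rfl⟩
  · rintro ⟨lam, hlam, rfl, rfl, rfl⟩
    refine ⟨⟨by linarith, le_rfl, by linarith⟩, ?_, by linarith, ?_⟩
    · intro u v hu hv huv
      nlinarith [sq_nonneg (u - (1 - v)), sq_nonneg (v - w)]
    · intro w' h; linarith
end

section
/- Consider the bilevel problem with F(x,y) = x² + y², no upper constraint, and lower-level problem minimize_w (x+w-1)² (unconstrained). The unique global solution of the SBP is (1/2, 1/2), but the triple (1/2, 1/2, 1/2) is not an equilibrium of the associated GNEP: the point (0, 1/2) is feasible for the leader's problem given w = 1/2 and has strictly smaller upper objective value. -/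
lemma mem_S {S : ℝ → Set ℝ}
    (hS : ∀ x, S x = {w | ∀ w' : ℝ, (x + w - 1)^2 ≤ (x + w' - 1)^2})
    {x y : ℝ} (h : y ∈ S x) : y = 1 - x := by
  rw [hS] at h
  have := h (1 - x)
  nlinarith [sq_nonneg (x + y - 1)]

/-- Example 2: (1/2,1/2) is the unique global solution of the SBP, but
(1/2,1/2,1/2) is not an equilibrium of the associated GNEP, as (0,1/2) is leader-feasible
given w = 1/2 with strictly smaller upper objective value. -/
theorem example2_sbp_solution_not_gnep_equilibrium
    (S : ℝ → Set ℝ)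
    (hS : ∀ x, S x = {w | ∀ w' : ℝ, (x + w - 1)^2 ≤ (x + w' - 1)^2}) :
    ((1/2 : ℝ) ∈ S (1/2)) ∧
    (∀ x y : ℝ, y ∈ S x → (1/2 : ℝ)^2 + (1/2 : ℝ)^2 ≤ x^2 + y^2) ∧
    (∀ x y : ℝ, y ∈ S x → x^2 + y^2 = (1/2:ℝ)^2 + (1/2:ℝ)^2 → x = 1/2 ∧ y = 1/2) ∧
    (((0:ℝ) + 1/2 - 1)^2 ≤ ((0:ℝ) + 1/2 - 1)^2 ∧
      (0:ℝ)^2 + (1/2:ℝ)^2 < (1/2:ℝ)^2 + (1/2:ℝ)^2) := by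
  refine ⟨?_, ?_, ?_, le_refl _, by norm_num⟩
  · rw [hS]; intro w'; nlinarith [sq_nonneg (1/2 + w' - 1)]
  · intro x y h
    have := mem_S hS h
    subst this
    nlinarith [sq_nonneg (x - 1/2)]
  · intro x y h heq
    have := mem_S hS h
    subst this
    constructor <;> nlinarith [sq_nonneg (x - 1/2)]
end

section
/- For the bilevel problem: minimize x² + (y₁+y₂)² subject to x ≥ 1/2 and (y₁,y₂) ∈ S(x), where S(x) = argmin{w₁ : x + w₁ + w₂ ≥ 1, w₁ ≥ 0, w₂ ≥ 0}: the point (1/2, 0, 1/2) is the unique global solution of the SBP, and it satisfies F(1/2,0,1/2) ≤ F(x,y₁,y₂) for all (x,y₁,y₂) with x ≥ 1/2, x + y₁ + y₂ ≥ 1, y₁ ≥ 0, y₂ ≥ 0 (i.e., it is an 'easy' solution minimizing F over T). -/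
/-- Example 3: (1/2, 0, 1/2) is the unique global solution of the SBP
and an "easy" solution minimizing F over T. -/
theorem example3_easy_solution
    (S : ℝ → Set (ℝ × ℝ))
    (hS : ∀ x, S x = {w | x + w.1 + w.2 ≥ 1 ∧ w.1 ≥ 0 ∧ w.2 ≥ 0 ∧
      ∀ v : ℝ × ℝ, x + v.1 + v.2 ≥ 1 → v.1 ≥ 0 → v.2 ≥ 0 → w.1 ≤ v.1}) :
    ((1/2 : ℝ) ≥ 1/2 ∧ ((0 : ℝ), (1/2 : ℝ)) ∈ S (1/2)) ∧
    (∀ x : ℝ, ∀ y : ℝ × ℝ, x ≥ 1/2 → y ∈ S x →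
      (1/2:ℝ)^2 + ((0:ℝ) + 1/2)^2 ≤ x^2 + (y.1 + y.2)^2) ∧
    (∀ x : ℝ, ∀ y : ℝ × ℝ, x ≥ 1/2 → y ∈ S x →
      x^2 + (y.1 + y.2)^2 = (1/2:ℝ)^2 + ((0:ℝ) + 1/2)^2 →
      x = 1/2 ∧ y.1 = 0 ∧ y.2 = 1/2) ∧
    (∀ x y₁ y₂ : ℝ, x ≥ 1/2 → x + y₁ + y₂ ≥ 1 → y₁ ≥ 0 → y₂ ≥ 0 →
      (1/2:ℝ)^2 + ((0:ℝ) + 1/2)^2 ≤ x^2 + (y₁ + y₂)^2) := by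
  refine ⟨⟨le_refl _, ?_⟩, ?_, ?_, ?_⟩
  · rw [hS]
    refine ⟨by norm_num, le_refl _, by norm_num, fun v _ hv1 _ => hv1⟩
  · intro x y hx hy
    rw [hS] at hy
    obtain ⟨h1, h2, h3, h4⟩ := hy
    have hle : y.1 ≤ 0 := h4 (0, 1) (by simp; linarith) (le_refl _) (by norm_num)
    have hy1 : y.1 = 0 := le_antisymm hle h2
    nlinarith [sq_nonneg (x - y.2), sq_nonneg (x + y.1 + y.2 - 1)]
  · intro x y hx hy heq
    rw [hS] at hy
    obtain ⟨h1, h2, h3, h4⟩ := hy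
    have hle : y.1 ≤ 0 := h4 (0, 1) (by simp; linarith) (le_refl _) (by norm_num)
    have hy1 : y.1 = 0 := le_antisymm hle h2
    refine ⟨?_, hy1, ?_⟩ <;> nlinarith [sq_nonneg (x - y.2), sq_nonneg (x + y.2 - 1)]
  · intro x y₁ y₂ hx h1 h2 h3
    nlinarith [sq_nonneg (x - y₁ - y₂), sq_nonneg (x + y₁ + y₂ - 1)]
end

section
/- For the bilevel problem: minimize x subject to -1 ≤ x ≤ 1 and y ∈ S(x), where S(x) = argmin{x·w : 0 ≤ w ≤ 1}: the point (0,0) is a local solution of the SBP (there is a neighborhood of (0,0) in ℝ² on which no feasible point has smaller objective) but not a strong local solution (for every neighborhood N of x* = 0 there is (x,y) ∈ W with x ∈ N and x < 0). -/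
/-- (0,0) is a local solution of the SBP but not a strong local solution. -/
theorem local_but_not_strong_local
    (S : ℝ → Set ℝ)
    (hS : ∀ x, S x = {w | 0 ≤ w ∧ w ≤ 1 ∧ ∀ v : ℝ, 0 ≤ v → v ≤ 1 → x * w ≤ x * v}) :
    ((-1 ≤ (0:ℝ) ∧ (0:ℝ) ≤ 1) ∧ (0 : ℝ) ∈ S 0) ∧
    (∃ ε > (0:ℝ), ∀ x y : ℝ, -1 ≤ x → x ≤ 1 → y ∈ S x →
      ‖(x, y) - ((0:ℝ), (0:ℝ))‖ < ε → (0:ℝ) ≤ x) ∧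
    (∀ N : Set ℝ, IsOpen N → (0:ℝ) ∈ N →
      ∃ x y : ℝ, -1 ≤ x ∧ x ≤ 1 ∧ y ∈ S x ∧ x ∈ N ∧ x < 0) := by
  refine ⟨⟨⟨by norm_num, by norm_num⟩, ?_⟩, ⟨1/2, by norm_num, ?_⟩, ?_⟩
  · rw [hS]; exact ⟨le_refl 0, by norm_num, fun v hv hv1 => by simp⟩
  · intro x y hx1 hx2 hy hnorm
    by_contra hlt
    push_neg at hlt
    rw [hS] at hy
    obtain ⟨hy0, hy1, hmin⟩ := hy
    -- since x < 0, y must be 1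
    have h1 : x * y ≤ x * 1 := hmin 1 (by norm_num) (le_refl 1)
    have hy_eq : y = 1 := by nlinarith
    subst hy_eq
    have : (1:ℝ) ≤ ‖(x, (1:ℝ)) - ((0:ℝ), (0:ℝ))‖ := by
      have := norm_snd_le ((x, (1:ℝ)) - ((0:ℝ), (0:ℝ)))
      simpa using this
    linarith
  · intro N hN h0
    obtain ⟨ε, hε, hball⟩ := Metric.isOpen_iff.mp hN 0 h0
    refine ⟨-min (ε/2) 1, 1, ?_, ?_, ?_, ?_, ?_⟩
    · have : min (ε/2) 1 ≤ 1 := min_le_right _ _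
      linarith
    · have : 0 < min (ε/2) 1 := lt_min (by linarith) one_pos
      linarith
    · rw [hS]
      refine ⟨by norm_num, le_refl 1, fun v hv hv1 => ?_⟩
      have hneg : -min (ε/2) 1 < 0 := by
        have : 0 < min (ε/2) 1 := lt_min (by linarith) one_pos
        linarith
      nlinarith
    · apply hball
      simp [Metric.mem_ball, Real.dist_eq]
      have h1 : 0 < min (ε/2) 1 := lt_min (by linarith) one_pos
      have h2 : min (ε/2) 1 ≤ ε/2 := min_le_left _ _
      rw [abs_of_pos h1]
      linarith
    · have : 0 < min (ε/2) 1 := lt_min (by linarith) one_pos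
      linarith
end

section
/- In the two-firm market model with Π₂ independent of q¹: suppose the follower's problem max{Π₂(w²) : w² ∈ X²} has optimal value Π₂*. If (q̄¹, q̄², w̄²) is an equilibrium of the uneven horizontal GNEP (leader maximizes Π₁(q¹,q²) over q¹ ∈ X¹, q² ∈ X² with Π₂(q²) ≥ Π₂(w²); follower maximizes Π₂(w²) over w² ∈ X²), then (q̄¹, q̄²) is a global solution of the vertical (bilevel) model: q̄¹ ∈ X¹, q̄² ∈ argmax{Π₂(w²) : w² ∈ X²}, and Π₁(q̄¹, q̄²) ≥ Π₁(q¹, q²) for all q¹ ∈ X¹ and q² ∈ argmax{Π₂ on X²}. -/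
/-- with P₂ independent of q¹, an equilibrium of the uneven horizontal
GNEP gives a global solution of the vertical (bilevel) model. -/
theorem uneven_horizontal_to_vertical {n₁ n₂ : ℕ}
    (X₁ : Set (Fin n₁ → ℝ)) (X₂ : Set (Fin n₂ → ℝ))
    (hX₁ : X₁.Nonempty) (hX₂ : X₂.Nonempty)
    (P₁ : (Fin n₁ → ℝ) → (Fin n₂ → ℝ) → ℝ) (P₂ : (Fin n₂ → ℝ) → ℝ)
    (q₁ : Fin n₁ → ℝ) (q₂ w₂ : Fin n₂ → ℝ)
    (hq₁ : q₁ ∈ X₁) (hq₂ : q₂ ∈ X₂) (hcoup : P₂ q₂ ≥ P₂ w₂)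
    (hLopt : ∀ p₁ ∈ X₁, ∀ p₂ ∈ X₂, P₂ p₂ ≥ P₂ w₂ → P₁ q₁ q₂ ≥ P₁ p₁ p₂)
    (hw₂ : w₂ ∈ X₂) (hFopt : ∀ v₂ ∈ X₂, P₂ w₂ ≥ P₂ v₂) :
    q₁ ∈ X₁ ∧
    (q₂ ∈ X₂ ∧ ∀ v₂ ∈ X₂, P₂ q₂ ≥ P₂ v₂) ∧
    ∀ p₁ ∈ X₁, ∀ p₂, (p₂ ∈ X₂ ∧ ∀ v₂ ∈ X₂, P₂ p₂ ≥ P₂ v₂) →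
      P₁ q₁ q₂ ≥ P₁ p₁ p₂ := by
  refine ⟨hq₁, ⟨hq₂, fun v₂ hv₂ => le_trans (hFopt v₂ hv₂) hcoup⟩, ?_⟩
  intro p₁ hp₁ p₂ ⟨hp₂, hp₂opt⟩
  exact hLopt p₁ hp₁ p₂ hp₂ (hp₂opt w₂ hw₂)
end
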